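/- arXiv:1707.03214 — 6 statements merged into one kernel-verified Lean document; each statement's English description precedes it below -/
import Mathlib

section
/- Let C be a Z2Z4-additive code, i.e., an additive subgroup of Z2^α × Z4^β. The binary image Φ(C) under the extended Gray map is a linear subspace of Z2^{α+2β} if and only if for all u, v ∈ C, the vector 2(u*v) belongs to C. -/
open Polynomial

noncomputable section

abbrev Z2 := ZMod 2
abbrev Z4 := ZMod 4

/-- Coefficientwise reduction modulo 2. -/
def ρ : Z4 →+* Z2 := ZMod.castHom (show 2 ∣ 4 by norm_num) Z2

/-- The quotient ring `R[x]/(x^n - 1)`. -/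
abbrev QR (R : Type) [CommRing R] (n : ℕ) :=
  Polynomial R ⧸ Ideal.span {(Polynomial.X : Polynomial R) ^ n - 1}

def pmk {R : Type} [CommRing R] (n : ℕ) (p : Polynomial R) : QR R n :=
  Ideal.Quotient.mk _ p

/-- `Z4[x]`-module structure on `Z2[x]/(x^n-1)` via reduction mod 2;
this gives the action `p ⋆ (b | a) = (p̃ b | p a)` on the product. -/
instance (n : ℕ) : Module (Polynomial Z4) (QR Z2 n) :=
  Module.compHom _ ((Ideal.Quotient.mk _).comp (mapRingHom ρ) : Polynomial Z4 →+* QR Z2 n)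

def hat (u : Z4) : Z2 := ((u.val / 2 : ℕ) : Z2)

def til (u : Z4) : Z2 := ((u.val : ℕ) : Z2)

/-- The Gray map `φ(u') = (û' | ũ' + û')`, with the second block of coordinates
indexed by the right summand. -/
def gray {ι : Type} (u : ι → Z4) : (ι ⊕ ι) → Z2 :=
  Sum.elim (fun i => hat (u i)) (fun i => til (u i) + hat (u i))

/-- The extended Gray map `Φ(u | u') = (u | φ(u'))`. -/
def extGray {ι κ : Type} (v : (ι → Z2) × (κ → Z4)) : (ι → Z2) × ((κ ⊕ κ) → Z2) :=
  (v.1, gray v.2)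

/-- Identification of `Z2^n` with `Z2[x]/(x^n-1)`. -/
def toQ2 {n : ℕ} (u : Fin n → Z2) : QR Z2 n :=
  pmk n (∑ i, Polynomial.C (u i) * Polynomial.X ^ (i : ℕ))

/-- Identification of `Z4^n` with `Z4[x]/(x^n-1)`. -/
def toQ4 {n : ℕ} (u : Fin n → Z4) : QR Z4 n :=
  pmk n (∑ i, Polynomial.C (u i) * Polynomial.X ^ (i : ℕ))

/-- The standard polynomial identification of `Z2^α × Z4^β` with `R_{α,β}`. -/
def ident {α β : ℕ} (v : (Fin α → Z2) × (Fin β → Z4)) : QR Z2 α × QR Z4 β :=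
  (toQ2 v.1, toQ4 v.2)

/-- Right cyclic shift: `(u_0,…,u_{n-1}) ↦ (u_{n-1},u_0,…,u_{n-2})`. -/
def shiftR {n : ℕ} {R : Type} (u : Fin n → R) : Fin n → R :=
  fun i => u ((finRotate n).symm i)

/-- Simultaneous cyclic shift on both blocks of `Z2^α × Z4^β`. -/
def bshift {α β : ℕ} (v : (Fin α → Z2) × (Fin β → Z4)) : (Fin α → Z2) × (Fin β → Z4) :=
  (shiftR v.1, shiftR v.2)

/-- `IsTensorSquare n p q` says that `q = (p ⊗ p)`: `q` is the (monic) divisor of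
`x^n - 1` in `Z2[x]` whose roots (in the splitting field of `x^n-1`) are exactly the
products of pairs of roots of `p`. -/
def IsTensorSquare (n : ℕ) (p q : Polynomial Z2) : Prop :=
  q ∣ (Polynomial.X ^ n - 1) ∧ q.Monic ∧
    ∀ z : ((Polynomial.X : Polynomial Z2) ^ n - 1).SplittingField,
      Polynomial.aeval z q = 0 ↔
        ∃ z₁ z₂, Polynomial.aeval z₁ p = 0 ∧ Polynomial.aeval z₂ p = 0 ∧ z = z₁ * z₂

/-- The Nechaev permutation on `Z2^{2n}` (coordinates indexed by `Fin n ⊕ Fin n`,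
with `inr i` standing for position `n + i`): it swaps positions `2i+1` and `n + 2i+1`. -/
def nechaev {n : ℕ} (v : (Fin n ⊕ Fin n) → Z2) : (Fin n ⊕ Fin n) → Z2 :=
  Sum.elim (fun i => if Odd (i : ℕ) then v (Sum.inr i) else v (Sum.inl i))
    (fun i => if Odd (i : ℕ) then v (Sum.inl i) else v (Sum.inr i))

/-- The extended Nechaev–Gray map `Ψ(u | u') = (u | σ(φ(u')))`. -/
def nechaevGrayExt {α β : ℕ} (v : (Fin α → Z2) × (Fin β → Z4)) :
    (Fin α → Z2) × ((Fin β ⊕ Fin β) → Z2) :=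
  (v.1, nechaev (gray v.2))

/-- Identification of `Z2^{2n}` (indexed by `Fin n ⊕ Fin n`) with `Z2[x]/(x^{2n}-1)`. -/
def toQ2D {n : ℕ} (w : (Fin n ⊕ Fin n) → Z2) : QR Z2 (2 * n) :=
  pmk (2 * n) (∑ i : Fin n,
    (Polynomial.C (w (Sum.inl i)) * Polynomial.X ^ (i : ℕ) +
      Polynomial.C (w (Sum.inr i)) * Polynomial.X ^ (n + (i : ℕ))))

/-- Identification of `Z2^α × Z2^{2β}` with `Z2[x]/(x^α-1) × Z2[x]/(x^{2β}-1)`. -/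
def pairD {α β : ℕ} (v : (Fin α → Z2) × ((Fin β ⊕ Fin β) → Z2)) :
    QR Z2 α × QR Z2 (2 * β) :=
  (toQ2 v.1, toQ2D v.2)

def leeWt (u : Z4) : ℕ := min u.val (4 - u.val)

def leeDist {n : ℕ} (u v : Fin n → Z4) : ℕ := ∑ i, leeWt (u i - v i)

/-! Coordinatewise, the Gray map satisfies `φ(a) + φ(b) = φ(a + b + 2ab)` on `Z4`, and the
binary part satisfies the same identity since `2ab = 0` in `Z2`. As `Φ` is injective,
`Φ(u) + Φ(v)` lies in `Φ(C)` exactly when `u + v + 2(u*v) ∈ C`, i.e. when `2(u*v) ∈ C`.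
Finally a subset of a `Z2`-vector space containing `0` is a subspace as soon as it is closed
under addition. -/

lemma exists_submodule_coe_eq_iff {M : Type*} [AddCommGroup M] [Module Z2 M] {s : Set M} :
    (∃ S : Submodule Z2 M, (S : Set M) = s) ↔
      0 ∈ s ∧ ∀ x ∈ s, ∀ y ∈ s, x + y ∈ s := by
  constructor
  · rintro ⟨S, rfl⟩
    exact ⟨S.zero_mem, fun x hx y hy => S.add_mem hx hy⟩
  · rintro ⟨hzero, hadd⟩
    refine ⟨AddSubgroup.toZModSubmodule 2
      { carrier := s
        add_mem' := fun hx hy => hadd _ hx _ hy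
        zero_mem' := hzero
        neg_mem' := fun {x} hx => by rwa [ZModModule.neg_eq_self x] }, rfl⟩

section Gray

variable {ι κ : Type}

lemma gray_add (u v : ι → Z4) : gray u + gray v = gray (u + v + 2 • (u * v)) := by
  funext j
  cases j with
  | inl i =>
    exact (by decide : ∀ a b : Z4, hat a + hat b = hat (a + b + 2 • (a * b))) (u i) (v i)
  | inr i =>
    exact (by decide : ∀ a b : Z4, til a + hat a + (til b + hat b) =
      til (a + b + 2 • (a * b)) + hat (a + b + 2 • (a * b))) (u i) (v i)

lemma gray_injective : Function.Injective (gray (ι := ι)) := by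
  intro u v h
  funext i
  exact (by decide : ∀ a b : Z4, hat a = hat b → til a + hat a = til b + hat b → a = b)
    (u i) (v i) (congrFun h (Sum.inl i)) (congrFun h (Sum.inr i))

lemma gray_zero : gray (0 : ι → Z4) = 0 := by
  funext j
  cases j
  · exact (by decide : hat 0 = 0)
  · exact (by decide : til 0 + hat 0 = 0)

lemma extGray_add (u v : (ι → Z2) × (κ → Z4)) :
    extGray u + extGray v = extGray (u + v + 2 • (u * v)) := by
  refine Prod.ext ?_ (gray_add u.2 v.2)
  change u.1 + v.1 = u.1 + v.1 + 2 • (u.1 * v.1)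
  rw [two_nsmul, ZModModule.add_self, add_zero]

lemma extGray_zero : extGray (0 : (ι → Z2) × (κ → Z4)) = 0 :=
  Prod.ext rfl gray_zero

lemma extGray_injective : Function.Injective (extGray (ι := ι) (κ := κ)) :=
  fun _ _ h => Prod.ext (congrArg Prod.fst h :) (gray_injective (congrArg Prod.snd h))

lemma extGray_add_mem_image_iff {C : AddSubgroup ((ι → Z2) × (κ → Z4))}
    {u v : (ι → Z2) × (κ → Z4)} (hu : u ∈ C) (hv : v ∈ C) :
    extGray u + extGray v ∈ extGray '' (C : Set _) ↔ 2 • (u * v) ∈ C := by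
  rw [extGray_add, extGray_injective.mem_set_image, SetLike.mem_coe,
    AddSubgroup.add_mem_cancel_left C (C.add_mem hu hv)]

end Gray

/-- For a `Z2Z4`-additive code `C` (an additive subgroup of `Z2^α × Z4^β`),
the image `Φ(C)` is a linear subspace of `Z2^{α+2β}` iff `2(u*v) ∈ C` for all `u, v ∈ C`. -/
theorem extGray_image_linear_iff (α β : ℕ)
    (C : AddSubgroup ((Fin α → Z2) × (Fin β → Z4))) :
    (∃ S : Submodule Z2 ((Fin α → Z2) × ((Fin β ⊕ Fin β) → Z2)),
        (S : Set _) = extGray (ι := Fin α) (κ := Fin β) '' (C : Set _)) ↔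
      ∀ u ∈ C, ∀ v ∈ C, 2 • (u * v) ∈ C := by
  have hzero : (0 : (Fin α → Z2) × ((Fin β ⊕ Fin β) → Z2)) ∈ extGray '' (C : Set _) :=
    ⟨0, C.zero_mem, extGray_zero⟩
  rw [exists_submodule_coe_eq_iff, and_iff_right hzero]
  simp only [Set.forall_mem_image]
  exact forall₂_congr fun u hu => forall₂_congr fun v hv => extGray_add_mem_image_iff hu hv
end
end

section
/- Let C be a Z2Z4-additive code in Z2^α × Z4^β such that Φ(C) is linear. Then C_Y, the projection of C onto the last β (quaternary) coordinates, is a Z4-linear code such that φ(C_Y) is a linear binary code. -/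
open Polynomial

noncomputable section

theorem snd_comp_extGray {ι κ : Type} :
    Prod.snd ∘ extGray (ι := ι) (κ := κ) = gray ∘ Prod.snd :=
  rfl

/-- If `C` is a `Z2Z4`-additive code with `Φ(C)` linear, then the
projection `C_Y` onto the quaternary coordinates is a `Z4`-linear code whose Gray
image `φ(C_Y)` is a linear binary code. -/
theorem proj_Y_linear_of_extGray_linear (α β : ℕ)
    (C : AddSubgroup ((Fin α → Z2) × (Fin β → Z4)))
    (hlin : ∃ S : Submodule Z2 ((Fin α → Z2) × ((Fin β ⊕ Fin β) → Z2)),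
        (S : Set _) = extGray (ι := Fin α) (κ := Fin β) '' (C : Set _)) :
    (∃ D : Submodule Z4 (Fin β → Z4),
        (D : Set _) = Prod.snd '' (C : Set ((Fin α → Z2) × (Fin β → Z4)))) ∧
      (∃ T : Submodule Z2 ((Fin β ⊕ Fin β) → Z2),
        (T : Set _) = gray (ι := Fin β) ''
          (Prod.snd '' (C : Set ((Fin α → Z2) × (Fin β → Z4))))) := by
  obtain ⟨S, hS⟩ := hlin
  constructor
  · refine ⟨AddSubgroup.toZModSubmodule 4 (C.map (AddMonoidHom.snd _ _)), ?_⟩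
    rw [AddSubgroup.coe_toZModSubmodule, AddSubgroup.coe_map, AddMonoidHom.coe_snd]
  · refine ⟨S.map (LinearMap.snd Z2 _ _), ?_⟩
    rw [Submodule.map_coe, hS, LinearMap.coe_snd, ← Set.image_comp, snd_comp_extGray,
      Set.image_comp]
end
end

section
/- There exists a Z2Z4-additive code C ⊆ Z2^2 × Z4^3 such that both projections C_X and C_Y are cyclic codes but C itself is not cyclic. Specifically, the code generated by the rows (1,0|1,0,0), (0,1|0,1,0), (0,0|0,0,1) has cyclic projections but π(0,0|0,0,1) = (0,0|1,0,0) ∉ C. -/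
open Polynomial

noncomputable section

/-! The code consists of all `(u | w)` with `u i = w i mod 2` for `i = 0, 1`. Both projections
are therefore the whole ambient space, which is trivially cyclic; but the coupling between the
blocks is not shift invariant: `(0,0|0,0,1) ∈ C` shifts to `(0,0|1,0,0)`, which violates
`u 0 = w 0 mod 2`. -/

def exampleCode : AddSubgroup ((Fin 2 → Z2) × (Fin 3 → Z4)) where
  carrier := {v | ρ (v.2 0) = v.1 0 ∧ ρ (v.2 1) = v.1 1}
  add_mem' := by
    rintro a b ⟨h0, h1⟩ ⟨h0', h1'⟩
    exact ⟨by simp [h0, h0'], by simp [h1, h1']⟩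
  zero_mem' := by simp
  neg_mem' := by rintro a ⟨h0, h1⟩; exact ⟨by simp [h0], by simp [h1]⟩

lemma mem_exampleCode {v : (Fin 2 → Z2) × (Fin 3 → Z4)} :
    v ∈ exampleCode ↔ ρ (v.2 0) = v.1 0 ∧ ρ (v.2 1) = v.1 1 := Iff.rfl

lemma closure_generators_eq_exampleCode :
    AddSubgroup.closure
        {((![1,0] : Fin 2 → Z2), (![1,0,0] : Fin 3 → Z4)),
         (![0,1], ![0,1,0]),
         (![0,0], ![0,0,1])} = exampleCode := by
  apply le_antisymm
  · rw [AddSubgroup.closure_le]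
    rintro v (rfl | rfl | rfl) <;> exact mem_exampleCode.2 (by decide)
  · rintro v ⟨h0, h1⟩
    have hv : v = (v.2 0).val • ((![1,0] : Fin 2 → Z2), (![1,0,0] : Fin 3 → Z4))
        + (v.2 1).val • ((![0,1] : Fin 2 → Z2), (![0,1,0] : Fin 3 → Z4))
        + (v.2 2).val • ((![0,0] : Fin 2 → Z2), (![0,0,1] : Fin 3 → Z4)) := by
      ext i
      · fin_cases i <;> simp [← h0, ← h1, ρ, ← ZMod.natCast_val]
      · fin_cases i <;> simp [ZMod.natCast_val]
    rw [hv]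
    refine add_mem (add_mem ?_ ?_) ?_ <;>
      exact AddSubgroup.nsmul_mem _ (AddSubgroup.subset_closure (by simp)) _

lemma image_fst_exampleCode :
    Prod.fst '' (exampleCode : Set ((Fin 2 → Z2) × (Fin 3 → Z4))) = Set.univ := by
  refine Set.eq_univ_of_forall fun u =>
    ⟨(u, ![((u 0).val : Z4), ((u 1).val : Z4), 0]), ?_, rfl⟩
  exact mem_exampleCode.2 ⟨by simp, by simp⟩

lemma image_snd_exampleCode :
    Prod.snd '' (exampleCode : Set ((Fin 2 → Z2) × (Fin 3 → Z4))) = Set.univ :=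
  Set.eq_univ_of_forall fun w =>
    ⟨(![ρ (w 0), ρ (w 1)], w), mem_exampleCode.2 ⟨by simp, by simp⟩, rfl⟩

lemma shiftR_surjective {n : ℕ} {R : Type} : Function.Surjective (shiftR (n := n) (R := R)) :=
  fun w => ⟨w ∘ finRotate n, funext fun i => by
    simp only [shiftR, Function.comp_apply, Equiv.apply_symm_apply]⟩

lemma image_shiftR_univ {n : ℕ} {R : Type} :
    shiftR '' (Set.univ : Set (Fin n → R)) = Set.univ :=
  Set.image_univ_of_surjective shiftR_surjective

/-- There is a `Z2Z4`-additive code `C ⊆ Z2^2 × Z4^3` whose projections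
`C_X` and `C_Y` are both cyclic while `C` itself is not cyclic; concretely the code
generated by `(1,0|1,0,0), (0,1|0,1,0), (0,0|0,0,1)`, for which
`π(0,0|0,0,1) = (0,0|1,0,0) ∉ C`. -/
theorem example_projections_cyclic_C_not_cyclic :
    ∃ C : AddSubgroup ((Fin 2 → Z2) × (Fin 3 → Z4)),
      C = AddSubgroup.closure
          {((![1,0] : Fin 2 → Z2), (![1,0,0] : Fin 3 → Z4)),
           (![0,1], ![0,1,0]),
           (![0,0], ![0,0,1])} ∧
      shiftR '' (Prod.fst '' (C : Set ((Fin 2 → Z2) × (Fin 3 → Z4)))) =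
        Prod.fst '' (C : Set ((Fin 2 → Z2) × (Fin 3 → Z4))) ∧
      shiftR '' (Prod.snd '' (C : Set ((Fin 2 → Z2) × (Fin 3 → Z4)))) =
        Prod.snd '' (C : Set ((Fin 2 → Z2) × (Fin 3 → Z4))) ∧
      (![0,0], ![0,0,1]) ∈ C ∧
      bshift ((![0,0] : Fin 2 → Z2), (![0,0,1] : Fin 3 → Z4)) = (![0,0], ![1,0,0]) ∧
      ((![0,0] : Fin 2 → Z2), (![1,0,0] : Fin 3 → Z4)) ∉ C ∧
      bshift '' (C : Set ((Fin 2 → Z2) × (Fin 3 → Z4))) ≠ (C : Set _) := by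
  have hmem : ((![0,0] : Fin 2 → Z2), (![0,0,1] : Fin 3 → Z4)) ∈ exampleCode :=
    mem_exampleCode.2 (by decide)
  have hshift :
      bshift ((![0,0] : Fin 2 → Z2), (![0,0,1] : Fin 3 → Z4)) = (![0,0], ![1,0,0]) := by
    decide
  have hnot : ((![0,0] : Fin 2 → Z2), (![1,0,0] : Fin 3 → Z4)) ∉ exampleCode :=
    fun h => absurd (mem_exampleCode.1 h).1 (by decide)
  refine ⟨exampleCode, closure_generators_eq_exampleCode.symm, ?_, ?_, hmem, hshift, hnot, ?_⟩
  · rw [image_fst_exampleCode, image_shiftR_univ]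
  · rw [image_snd_exampleCode, image_shiftR_univ]
  · intro h
    have : bshift (![0,0], ![0,0,1]) ∈ (exampleCode : Set _) := h ▸ Set.mem_image_of_mem _ hmem
    exact hnot (hshift ▸ this)
end
end

section
/- A subset C ⊆ Z2^α × Z4^β is a Z2Z4-additive cyclic code (an additive subgroup invariant under the simultaneous cyclic shift) if and only if its image under the standard polynomial identification is a Z4[x]-submodule of R_{α,β} = Z2[x]/(x^α−1) × Z4[x]/(x^β−1). -/
/-!
Under the polynomial identification the simultaneous cyclic shift becomes multiplication by `x`,
since `x^n = 1` in `R[x]/(x^n - 1)`; and every constant of `Z4[x]` acts as an integer multiple.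
So an additive subgroup is closed under the shift exactly when its image is closed under all of
`Z4[x]`. Conversely, closure under the shift already gives invariance, because the shift is
injective and the ambient space is finite.
-/

open Polynomial

noncomputable section

section CyclicIdentification

variable {R : Type} [CommRing R]

lemma coeff_sum_fin_C_mul_X_pow {n : ℕ} (u : Fin n → R) (j : Fin n) :
    (∑ i, C (u i) * X ^ (i : ℕ)).coeff j = u j := by
  simp only [finsetSum_coeff, coeff_C_mul, coeff_X_pow, Fin.val_inj, mul_ite, mul_one,
    mul_zero, Finset.sum_ite_eq, Finset.mem_univ, if_true]

variable (R) in
/-- `toQ2` and `toQ4` are definitionally `toQR Z2` and `toQR Z4`. -/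
def toQR (n : ℕ) : (Fin n → R) →+ QR R n where
  toFun u := pmk n (∑ i, C (u i) * X ^ (i : ℕ))
  map_zero' := by simp [pmk]
  map_add' u v := by simp [pmk, add_mul, Finset.sum_add_distrib]

lemma toQR_injective [Nontrivial R] (n : ℕ) : Function.Injective (toQR R n) := by
  rcases n.eq_zero_or_pos with rfl | hn
  · exact Function.injective_of_subsingleton _
  have hmonic : ((X : R[X]) ^ n - 1).Monic := monic_X_pow_sub_C 1 hn.ne'
  have hdeg (u : Fin n → R) :
      (∑ i, C (u i) * X ^ (i : ℕ)).degree < ((X : R[X]) ^ n - 1).degree := by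
    rw [← C_1, degree_X_pow_sub_C hn]
    exact degree_sum_fin_lt u
  have hmod (u : Fin n → R) :
      AdjoinRoot.modByMonicHom hmonic (toQR R n u) = ∑ i, C (u i) * X ^ (i : ℕ) :=
    (AdjoinRoot.modByMonicHom_mk hmonic _).trans ((modByMonic_eq_self_iff hmonic).2 (hdeg u))
  intro u v h
  funext j
  rw [← coeff_sum_fin_C_mul_X_pow u, ← coeff_sum_fin_C_mul_X_pow v, ← hmod, ← hmod, h]

lemma val_finRotate {n : ℕ} (i : Fin n) : (finRotate n i : ℕ) = (i + 1) % n := by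
  rcases n with _ | m
  · exact i.elim0
  rw [finRotate_apply, Fin.val_add]
  simp

variable (R) in
lemma pmk_X_pow_mod (n k : ℕ) : pmk n (X ^ (k % n) : R[X]) = pmk n (X ^ k) := by
  have hXn : Ideal.Quotient.mk (Ideal.span {(X : R[X]) ^ n - 1}) (X ^ n) = 1 := by
    rw [← map_one (Ideal.Quotient.mk _), Ideal.Quotient.eq]
    exact Ideal.mem_span_singleton_self _
  conv_rhs => rw [← Nat.mod_add_div k n, pow_add, pow_mul]
  rw [pmk, pmk, map_mul, map_pow _ (X ^ n), hXn, one_pow, mul_one]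

lemma toQR_shiftR {n : ℕ} (u : Fin n → R) : toQR R n (shiftR u) = pmk n X * toQR R n u := by
  simp only [toQR, AddMonoidHom.coe_mk, ZeroHom.coe_mk, pmk, ← map_mul, Finset.mul_sum, map_sum]
  rw [← Equiv.sum_comp (finRotate n)]
  refine Finset.sum_congr rfl fun j _ => ?_
  have hrot := pmk_X_pow_mod R n (j + 1)
  rw [pmk, pmk] at hrot
  rw [shiftR, Equiv.symm_apply_apply, val_finRotate, map_mul, hrot, ← map_mul]
  congr 1
  ring

end CyclicIdentification

lemma shiftR_injective {R : Type} {n : ℕ} : Function.Injective (shiftR : (Fin n → R) → Fin n → R) :=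
  fun u v h => funext fun i => by
    simpa only [shiftR, Equiv.symm_apply_apply] using congrFun h (finRotate n i)

lemma bshift_injective {α β : ℕ} : Function.Injective (@bshift α β) :=
  shiftR_injective.prodMap shiftR_injective

section PolynomialSubmodule

variable {n : ℕ} {M : Type*} [AddCommGroup M] [Module (ZMod n)[X] M]

lemma AddSubgroup.C_smul_mem (H : AddSubgroup M) (a : ZMod n) {z : M} (hz : z ∈ H) :
    (C a : (ZMod n)[X]) • z ∈ H := by
  obtain ⟨k, rfl⟩ := ZMod.intCast_surjective a
  rw [map_intCast, Int.cast_smul_eq_zsmul]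
  exact H.zsmul_mem hz k

lemma AddSubgroup.smul_mem_of_X_smul_mem (H : AddSubgroup M)
    (hX : ∀ z ∈ H, (X : (ZMod n)[X]) • z ∈ H) (p : (ZMod n)[X]) {z : M} (hz : z ∈ H) :
    p • z ∈ H := by
  induction p using Polynomial.induction_on' with
  | add p q hp hq => rw [add_smul]; exact H.add_mem hp hq
  | monomial k a =>
    have hXk : (X ^ k : (ZMod n)[X]) • z ∈ H := by
      induction k with
      | zero => rwa [pow_zero, one_smul]
      | succ k ih => rw [pow_succ', mul_smul]; exact hX _ ih
    rw [← C_mul_X_pow_eq_monomial, mul_smul]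
    exact H.C_smul_mem a hXk

end PolynomialSubmodule

def identHom (α β : ℕ) : ((Fin α → Z2) × (Fin β → Z4)) →+ QR Z2 α × QR Z4 β :=
  (toQR Z2 α).prodMap (toQR Z4 β)

lemma ident_injective {α β : ℕ} : Function.Injective (@ident α β) := by
  have : Fact (1 < 4) := ⟨by norm_num⟩
  exact (toQR_injective α).prodMap (toQR_injective β)

lemma ident_bshift {α β : ℕ} (v : (Fin α → Z2) × (Fin β → Z4)) :
    ident (bshift v) = (X : Z4[X]) • ident v := by
  refine Prod.ext ?_ ?_
  · show toQR Z2 α (shiftR v.1) = Ideal.Quotient.mk _ (map ρ X) * toQR Z2 α v.1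
    rw [map_X]
    exact toQR_shiftR v.1
  · exact toQR_shiftR v.2

/-- A subset `C ⊆ Z2^α × Z4^β` is a `Z2Z4`-additive cyclic code
(an additive subgroup invariant under the simultaneous cyclic shift) if and only if its
image under the standard polynomial identification is a `Z4[x]`-submodule of
`R_{α,β} = Z2[x]/(x^α-1) × Z4[x]/(x^β-1)`. -/
theorem cyclic_iff_submodule (α β : ℕ) (C : Set ((Fin α → Z2) × (Fin β → Z4))) :
    ((∃ G : AddSubgroup ((Fin α → Z2) × (Fin β → Z4)), (G : Set _) = C) ∧
        bshift '' C = C) ↔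
      ∃ S : Submodule (Polynomial Z4) (QR Z2 α × QR Z4 β),
        (S : Set _) = ident '' C := by
  constructor
  · rintro ⟨⟨G, rfl⟩, hshift⟩
    let H := G.map (identHom α β)
    have hX : ∀ z ∈ H, (X : Z4[X]) • z ∈ H := by
      rintro _ ⟨v, hv, rfl⟩
      exact ⟨bshift v, hshift.subset (Set.mem_image_of_mem _ hv), ident_bshift v⟩
    exact ⟨{ H with smul_mem' := fun p _ hz => H.smul_mem_of_X_smul_mem hX p hz },
      AddSubgroup.coe_map _ _⟩
  · rintro ⟨S, hS⟩
    have hC : C = ident ⁻¹' (S : Set (QR Z2 α × QR Z4 β)) := by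
      rw [hS, ident_injective.preimage_image]
    have hshift : bshift '' C ⊆ C := by
      rintro _ ⟨v, hv, rfl⟩
      rw [hC] at hv ⊢
      rw [Set.mem_preimage, ident_bshift]
      exact S.smul_mem X hv
    exact ⟨⟨S.toAddSubgroup.comap (identHom α β), hC.symm⟩,
      Set.eq_of_subset_of_ncard_le hshift (Set.ncard_image_of_injective _ bshift_injective).ge⟩
end
end

section
/- Let C = ⟨(b|0), (ℓ | fh + 2f)⟩ be a Z2Z4-additive cyclic code with β odd and fgh = x^β − 1 in Z4[x]. Set ℓ' = ℓ − μ̃ ℓ g̃ (mod x^α − 1), where λh + μg = 1 in Z4[x]. Then C is also generated as a Z4[x]-module by the three elements (b|0), (ℓg̃ | 2fg), and (ℓ' | fh). -/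
open Polynomial

noncomputable section

/-! Multiplying the generator `v = (ℓ | fh + 2f)` by `g` kills `fgh = x^β - 1` and leaves
`(ℓg̃ | 2fg)`. Since `1 - μg = λh`, multiplying `v` by `1 - μg` gives `(ℓ' | (1 + 2λ)fh)`, and
`1 + 2λ` is a unit with inverse `1 - 2λ` (as `4 = 0`) reducing to `1` modulo 2. Conversely
`(1 + 2λ)(fh + 2μfg) = fh + 2f(λh + μg) = fh + 2f`. So `v` and the two new generators span the
same submodule, and `(b|0)` is common to both sides. -/

lemma pmk_eq_pmk_iff {R : Type} [CommRing R] {n : ℕ} {a c : R[X]} :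
    pmk n a = pmk n c ↔ X ^ n - 1 ∣ a - c :=
  Ideal.Quotient.eq.trans Ideal.mem_span_singleton

lemma pmk_add {R : Type} [CommRing R] {n : ℕ} (a c : R[X]) :
    pmk n a + pmk n c = pmk n (a + c) :=
  (map_add _ a c).symm

lemma smul_pmk_prod {α β : ℕ} (p : Z4[X]) (c : Z2[X]) (d : Z4[X]) :
    p • ((pmk α c, pmk β d) : QR Z2 α × QR Z4 β) = (pmk α (p.map ρ * c), pmk β (p * d)) :=
  rfl

lemma map_ρ_two_mul (p : Z4[X]) : (2 * p).map ρ = 0 := by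
  rw [Polynomial.map_mul, Polynomial.map_ofNat, two_mul, CharTwo.add_self_eq_zero]

lemma span_singleton_eq_span_pair {R M : Type*} [Semiring R] [AddCommMonoid M] [Module R M]
    {v v₁ v₂ : M} {r s t u : R} (h₁ : v₁ = r • v) (h₂ : v₂ = s • v) (h : v = t • v₁ + u • v₂) :
    R ∙ v = Submodule.span R {v₁, v₂} := by
  refine le_antisymm ((Submodule.span_singleton_le_iff_mem _ _).mpr ?_) ?_
  · exact Submodule.mem_span_pair.mpr ⟨t, u, h.symm⟩
  · rw [Submodule.span_le, Set.insert_subset_iff, Set.singleton_subset_iff]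
    exact ⟨Submodule.mem_span_singleton.mpr ⟨r, h₁.symm⟩,
      Submodule.mem_span_singleton.mpr ⟨s, h₂.symm⟩⟩

section Generators

variable {α β : ℕ} (ℓ : Z2[X]) {f g h lam mu : Z4[X]}

lemma g_smul_generator (hfgh : f * g * h = X ^ β - 1) :
    g • ((pmk α ℓ, pmk β (f * h + 2 * f)) : QR Z2 α × QR Z4 β) =
      (pmk α (ℓ * g.map ρ), pmk β (2 * f * g)) := by
  rw [smul_pmk_prod, Prod.mk.injEq]
  exact ⟨congrArg _ (mul_comm _ _), pmk_eq_pmk_iff.mpr ⟨1, by rw [← hfgh]; ring⟩⟩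

lemma smul_generator_eq_fh (hfgh : f * g * h = X ^ β - 1) (hlm : lam * h + mu * g = 1) :
    ((1 - 2 * lam) * (1 - mu * g)) • ((pmk α ℓ, pmk β (f * h + 2 * f)) : QR Z2 α × QR Z4 β) =
      (pmk α (ℓ - mu.map ρ * ℓ * g.map ρ), pmk β (f * h)) := by
  have hred : ((1 - 2 * lam) * (1 - mu * g)).map ρ = 1 - mu.map ρ * g.map ρ := by
    rw [Polynomial.map_mul, Polynomial.map_sub, Polynomial.map_one, map_ρ_two_mul, sub_zero,
      one_mul, Polynomial.map_sub, Polynomial.map_one, Polynomial.map_mul]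
  rw [smul_pmk_prod, hred, Prod.mk.injEq]
  refine ⟨congrArg _ (by ring), pmk_eq_pmk_iff.mpr ⟨-((1 - 2 * lam) * mu), ?_⟩⟩
  rw [← hfgh]
  linear_combination
    (-(2 * f)) * hlm - (lam * f - lam * mu * g * f) * CharP.ofNat_eq_zero Z4[X] 4

lemma generator_eq_smul_add_smul (hlm : lam * h + mu * g = 1) :
    ((pmk α ℓ, pmk β (f * h + 2 * f)) : QR Z2 α × QR Z4 β) =
      ((1 + 2 * lam) * mu) • (pmk α (ℓ * g.map ρ), pmk β (2 * f * g)) +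
        (1 + 2 * lam) • (pmk α (ℓ - mu.map ρ * ℓ * g.map ρ), pmk β (f * h)) := by
  have hred : (1 + 2 * lam).map ρ = 1 := by
    rw [Polynomial.map_add, Polynomial.map_one, map_ρ_two_mul, add_zero]
  rw [smul_pmk_prod, smul_pmk_prod, Prod.mk_add_mk, pmk_add, pmk_add, Polynomial.map_mul, hred]
  congr 2
  · ring
  · linear_combination (-(2 * f)) * hlm + (-(lam * mu * f * g)) * CharP.ofNat_eq_zero Z4[X] 4

end Generators

theorem three_generators_general (α β : ℕ)
    (b ℓ : Polynomial Z2) (f g h : Polynomial Z4)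
    (hfgh : f * g * h = Polynomial.X ^ β - 1)
    (lam mu : Polynomial Z4) (hlm : lam * h + mu * g = 1) :
    Submodule.span (Polynomial Z4)
        {((pmk α b : QR Z2 α), (0 : QR Z4 β)), (pmk α ℓ, pmk β (f * h + 2 * f))} =
      Submodule.span (Polynomial Z4)
        {((pmk α b : QR Z2 α), (0 : QR Z4 β)),
         (pmk α (ℓ * g.map ρ), pmk β (2 * f * g)),
         (pmk α (ℓ - mu.map ρ * ℓ * g.map ρ), pmk β (f * h))} := by
  rw [Submodule.span_insert, Submodule.span_insert _ {_, _}]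
  congr 1
  exact span_singleton_eq_span_pair (g_smul_generator ℓ hfgh).symm
    (smul_generator_eq_fh ℓ hfgh hlm).symm (generator_eq_smul_add_smul ℓ hlm)

/-- For `C = ⟨(b|0), (ℓ | fh+2f)⟩` with `β` odd and `fgh = x^β-1`, setting
`ℓ' = ℓ - μ̃ℓg̃` (where `λh + μg = 1`), the code `C` is also generated by the three
elements `(b|0)`, `(ℓg̃ | 2fg)` and `(ℓ' | fh)`. -/
theorem three_generators (α β : ℕ) (hβ : Odd β)
    (b ℓ : Polynomial Z2) (f g h : Polynomial Z4)
    (hb : b ∣ Polynomial.X ^ α - 1)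
    (hfgh : f * g * h = Polynomial.X ^ β - 1)
    (lam mu : Polynomial Z4) (hlm : lam * h + mu * g = 1) :
    Submodule.span (Polynomial Z4)
        {((pmk α b : QR Z2 α), (0 : QR Z4 β)), (pmk α ℓ, pmk β (f * h + 2 * f))} =
      Submodule.span (Polynomial Z4)
        {((pmk α b : QR Z2 α), (0 : QR Z4 β)),
         (pmk α (ℓ * g.map ρ), pmk β (2 * f * g)),
         (pmk α (ℓ - mu.map ρ * ℓ * g.map ρ), pmk β (f * h))} :=
  three_generators_general α β b ℓ f g h hfgh lam mu hlm
end
end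

section
/- Every binary Z2-double cyclic code C of length r+s is generated, as a Z2[x]-submodule of Z2[x]/(x^r−1) × Z2[x]/(x^s−1), by two elements (b | 0) and (ℓ | a), where a | x^s − 1, b | x^r − 1, and deg ℓ < deg b. -/
open Polynomial

noncomputable section

/-
The projection of a double cyclic code to its second block and its intersection with the first
block are cyclic codes, i.e. ideals of principal quotient rings, generated by divisors `a` of
`x^s - 1` and `b` of `x^r - 1`. Lifting `a` to a codeword `(ℓ | a)` and reducing `ℓ` modulo `b`
gives the second generator: any codeword minus a multiple of `(ℓ | a)` lies in the first block.
-/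

theorem Submodule.exists_dvd_eq_span_mk {R : Type*} [CommRing R] [IsPrincipalIdealRing R]
    (f : R) (M : Submodule R (R ⧸ Ideal.span {f})) :
    ∃ g : R, g ∣ f ∧ M = span R {Ideal.Quotient.mk _ g} := by
  obtain ⟨g, hg⟩ := (IsPrincipalIdealRing.principal (M.comap (Ideal.span {f}).mkQ)).principal
  have hf : f ∈ M.comap (Ideal.span {f}).mkQ := by simp
  refine ⟨g, Ideal.mem_span_singleton.mp (by rwa [hg] at hf), ?_⟩
  rw [← Submodule.map_comap_eq_of_surjective (Ideal.span {f}).mkQ_surjective M, hg,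
    Submodule.map_span, Set.image_singleton]
  rfl

theorem Submodule.eq_span_pair_of_comap_inl_of_map_snd {R M N : Type*} [Ring R]
    [AddCommGroup M] [AddCommGroup N] [Module R M] [Module R N] {S : Submodule R (M × N)}
    {b : M} {c : M × N} (hb : S.comap (LinearMap.inl R M N) = span R {b}) (hc : c ∈ S)
    (hc₂ : S.map (LinearMap.snd R M N) = span R {c.2}) :
    S = span R {(b, 0), c} := by
  have hbS : ((b, 0) : M × N) ∈ S := by
    simpa using (hb.ge (mem_span_singleton_self b) : b ∈ S.comap (LinearMap.inl R M N))
  refine le_antisymm (fun z hz ↦ ?_) (span_le.mpr (Set.insert_subset hbS (by simpa using hc)))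
  obtain ⟨p, hp⟩ := mem_span_singleton.mp (hc₂ ▸ mem_map_of_mem hz : z.2 ∈ span R {c.2})
  have hw : LinearMap.inl R M N (z - p • c).1 = z - p • c := by ext <;> simp [hp]
  have hw₁ : (z - p • c).1 ∈ S.comap (LinearMap.inl R M N) := by
    rw [mem_comap, hw]; exact S.sub_mem hz (S.smul_mem p hc)
  obtain ⟨q, hq⟩ := mem_span_singleton.mp (hb ▸ hw₁)
  refine mem_span_pair.mpr ⟨q, p, ?_⟩
  ext <;> simp [hq, hp]

theorem Submodule.mk_mod_prod_mem {R N : Type*} [EuclideanDomain R] [AddCommGroup N]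
    [Module R N] {I : Ideal R} {S : Submodule R ((R ⧸ I) × N)} {b x : R} {y : N}
    (hb : (Ideal.Quotient.mk I b, 0) ∈ S) (hx : (Ideal.Quotient.mk I x, y) ∈ S) :
    (Ideal.Quotient.mk I (x % b), y) ∈ S := by
  have hmod : (Ideal.Quotient.mk I (x % b), y) =
      (Ideal.Quotient.mk I x, y) - (x / b) • (Ideal.Quotient.mk I b, 0) := by
    ext
    · simp [EuclideanDomain.mod_eq_sub_mul_div, Algebra.smul_def, mul_comm]
    · simp
  exact hmod ▸ S.sub_mem hx (S.smul_mem _ hb)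

theorem Polynomial.exists_span_pair_eq_of_submodule_prod_quotient {K : Type*} [Field K]
    {f g : K[X]} (hf : f ≠ 0)
    (S : Submodule K[X] ((K[X] ⧸ Ideal.span {f}) × (K[X] ⧸ Ideal.span {g}))) :
    ∃ b ℓ a : K[X], b ∣ f ∧ a ∣ g ∧ ℓ.degree < b.degree ∧
      S = Submodule.span K[X] {(Ideal.Quotient.mk _ b, 0),
        (Ideal.Quotient.mk _ ℓ, Ideal.Quotient.mk _ a)} := by
  obtain ⟨a, hag, ha⟩ := Submodule.exists_dvd_eq_span_mk g (S.map (LinearMap.snd _ _ _))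
  obtain ⟨b, hbf, hb⟩ := Submodule.exists_dvd_eq_span_mk f (S.comap (LinearMap.inl _ _ _))
  have hb₀ : b ≠ 0 := by rintro rfl; exact hf (zero_dvd_iff.mp hbf)
  have hbS : (Ideal.Quotient.mk _ b, 0) ∈ S := by
    simpa using (hb.ge (Submodule.mem_span_singleton_self _) :
      Ideal.Quotient.mk _ b ∈ S.comap (LinearMap.inl _ _ _))
  obtain ⟨⟨u, w⟩, hvS, rfl : w = Ideal.Quotient.mk _ a⟩ :=
    (ha.ge (Submodule.mem_span_singleton_self _) :
      Ideal.Quotient.mk _ a ∈ S.map (LinearMap.snd _ _ _))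
  obtain ⟨ℓ₁, rfl⟩ := Ideal.Quotient.mk_surjective u
  exact ⟨b, ℓ₁ % b, a, hbf, hag, degree_mod_lt ℓ₁ hb₀,
    Submodule.eq_span_pair_of_comap_inl_of_map_snd hb (Submodule.mk_mod_prod_mem hbS hvS) ha⟩

theorem double_cyclic_generators_general (r s : ℕ) (hr : 0 < r)
    (S : Submodule (Polynomial Z2) (QR Z2 r × QR Z2 s)) :
    ∃ b ℓ a : Polynomial Z2,
      b ∣ Polynomial.X ^ r - 1 ∧ a ∣ Polynomial.X ^ s - 1 ∧ ℓ.degree < b.degree ∧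
        S = Submodule.span (Polynomial Z2)
          {((pmk r b : QR Z2 r), (0 : QR Z2 s)), (pmk r ℓ, pmk s a)} := by
  have hX : (X : Z2[X]) ^ r - 1 ≠ 0 := by simpa using X_pow_sub_C_ne_zero hr (1 : Z2)
  exact exists_span_pair_eq_of_submodule_prod_quotient hX S

/-- Every binary `Z2`-double cyclic code of length `r+s`, i.e. every
`Z2[x]`-submodule of `Z2[x]/(x^r-1) × Z2[x]/(x^s-1)`, is generated by two elements
`(b | 0)` and `(ℓ | a)` with `a ∣ x^s - 1`, `b ∣ x^r - 1` and `deg ℓ < deg b`. -/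
theorem double_cyclic_generators (r s : ℕ) (hr : 0 < r) (hs : 0 < s)
    (S : Submodule (Polynomial Z2) (QR Z2 r × QR Z2 s)) :
    ∃ b ℓ a : Polynomial Z2,
      b ∣ Polynomial.X ^ r - 1 ∧ a ∣ Polynomial.X ^ s - 1 ∧ ℓ.degree < b.degree ∧
        S = Submodule.span (Polynomial Z2)
          {((pmk r b : QR Z2 r), (0 : QR Z2 s)), (pmk r ℓ, pmk s a)} :=
  double_cyclic_generators_general r s hr S
end
end
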